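/- 𝔡-Abel formula: if Z is the arithmetic grid z_i = a + bi (a, b ∈ K) and (p_n) is the basic sequence of the delta operator 𝔡, then the generalized Gončarov polynomials satisfy (x − a − nb)·t_n(x; 𝔡, Z) = (x − a)·p_n(x − a − nb) for all n ≥ 1. -/

import Mathlib

open Polynomial

/-- The shift operator `E_a : K[x] → K[x]`, `f(x) ↦ f(x+a)`, as a linear endomorphism. -/
noncomputable def shiftOp (K : Type*) [Field K] (a : K) : Module.End K (Polynomial K) :=
  (aeval (X + C a) : Polynomial K →ₐ[K] Polynomial K).toLinearMap

/-- A linear operator on `K[x]` is shift-invariant if it commutes with every shift `E_a`. -/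
def IsShiftInvariant {K : Type*} [Field K] (s : Module.End K (Polynomial K)) : Prop :=
  ∀ a : K, s ∘ₗ shiftOp K a = shiftOp K a ∘ₗ s

/-- A delta operator: shift-invariant and sends `X` to a nonzero constant. -/
def IsDeltaOperator {K : Type*} [Field K] (d : Module.End K (Polynomial K)) : Prop :=
  IsShiftInvariant d ∧ ∃ c : K, c ≠ 0 ∧ d X = C c

/-- The sequence of basic polynomials of a delta operator `d`. -/
def IsBasicSequence {K : Type*} [Field K] (d : Module.End K (Polynomial K))
    (p : ℕ → Polynomial K) : Prop :=
  p 0 = 1 ∧ (∀ n, 1 ≤ n → (p n).eval 0 = 0) ∧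
    ∀ n, 1 ≤ n → d (p n) = (n : K) • p (n - 1)

/-- The generalized Gončarov basis associated with the pair `(d, z)`:
`deg t_n = n` and `ε_{z_i}(d^i t_n) = n! δ_{i,n}`. -/
def IsGoncarovBasis {K : Type*} [Field K] (d : Module.End K (Polynomial K))
    (z : ℕ → K) (t : ℕ → Polynomial K) : Prop :=
  ∀ n, (t n).natDegree = n ∧
    ∀ i, ((d ^ i) (t n)).eval (z i) = if i = n then (n.factorial : K) else 0

/-!
For `n ≥ 1` the polynomial `(X - a) p_n(X - a - nb) / (X - a - nb)` has the Gončarov data of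
`t_n` on the grid `a + ib`: applying `d` lowers `n` by one and moves the grid by `b`, because
`d (p_{n+1} / X) = n p_n / X`. This follows from Rota's transfer formula `(p_{n+1} / X)' = p_n`
for the Pincherle derivative `s' = s X - X s`. Since a delta operator lowers degrees by exactly
one, Gončarov data determine a polynomial, so this polynomial is `t_n`. The transfer formula is
proved the same way on the grid `0`, using that shift-invariant operators commute (both are power
series in the Hasse derivatives).
-/

section

variable {K : Type*} [Field K]

theorem shiftOp_apply (u : K) (f : K[X]) : shiftOp K u f = f.comp (X + C u) :=
  (comp_eq_aeval ..).symm

theorem Polynomial.hasseDeriv_hasseDeriv_comm {R : Type*} [Semiring R] (j k : ℕ) (f : R[X]) :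
    hasseDeriv j (hasseDeriv k f) = hasseDeriv k (hasseDeriv j f) := by
  simp only [← LinearMap.comp_apply, hasseDeriv_comp, add_comm j k, Nat.choose_symm_add]

namespace IsShiftInvariant

variable {s s₁ s₂ : Module.End K K[X]}

theorem map_comp_X_add_C (hs : IsShiftInvariant s) (u : K) (f : K[X]) :
    s (f.comp (X + C u)) = (s f).comp (X + C u) := by
  simpa [shiftOp_apply] using LinearMap.congr_fun (hs u) f

theorem eq_sum_hasseDeriv [Infinite K] (hs : IsShiftInvariant s) {f : K[X]} {m : ℕ}
    (hf : f.natDegree ≤ m) :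
    s f = ∑ k ∈ Finset.range (m + 1), eval 0 (s (X ^ k)) • hasseDeriv k f := by
  refine Polynomial.funext fun u => ?_
  have htaylor : f.comp (X + C u) =
      ∑ k ∈ Finset.range (m + 1), eval u (hasseDeriv k f) • X ^ k := by
    rw [← taylor_apply, as_sum_range' (taylor u f) (m + 1) (by rw [natDegree_taylor]; omega)]
    simp only [taylor_coeff, smul_X_eq_monomial]
  have hshift : eval u (s f) = eval 0 (s (f.comp (X + C u))) := by
    rw [hs.map_comp_X_add_C, eval_comp]
    simp
  simp only [hshift, htaylor, map_sum, map_smul, eval_finsetSum, eval_smul, smul_eq_mul,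
    mul_comm]

theorem commute [Infinite K] (hs₁ : IsShiftInvariant s₁) (hs₂ : IsShiftInvariant s₂) :
    Commute s₁ s₂ := by
  refine LinearMap.ext fun f => ?_
  have hD : ∀ k, (hasseDeriv k f).natDegree ≤ f.natDegree :=
    fun k => (natDegree_hasseDeriv_le f k).trans tsub_le_self
  simp only [Module.End.mul_apply]
  rw [hs₂.eq_sum_hasseDeriv (f := f) le_rfl, hs₁.eq_sum_hasseDeriv (f := f) le_rfl, map_sum,
    map_sum]
  simp only [map_smul, hs₁.eq_sum_hasseDeriv (hD _), hs₂.eq_sum_hasseDeriv (hD _),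
    Finset.smul_sum, smul_smul]
  rw [Finset.sum_comm]
  simp only [hasseDeriv_hasseDeriv_comm _ _ f, mul_comm]

end IsShiftInvariant

namespace IsDeltaOperator

variable {d : Module.End K K[X]}

theorem map_one (hd : IsDeltaOperator d) : d 1 = 0 := by
  obtain ⟨c, -, hdX⟩ := hd.2
  have h := hd.1.map_comp_X_add_C 1 X
  rw [X_comp, hdX, map_add, hdX, C_comp, C_1] at h
  exact add_eq_left.mp h

theorem map_C (hd : IsDeltaOperator d) (a : K) : d (C a) = 0 := by
  rw [← mul_one (C a), ← smul_eq_C_mul, map_smul, hd.map_one, smul_zero]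

theorem coeff_apply [Infinite K] (hd : IsDeltaOperator d) (f : K[X]) (q : ℕ) :
    (d f).coeff q = ∑ k ∈ Finset.range (f.natDegree + 1),
      eval 0 (d (X ^ k)) * ((q + k).choose k * f.coeff (q + k)) := by
  rw [hd.1.eq_sum_hasseDeriv le_rfl, finsetSum_coeff]
  simp only [coeff_smul, hasseDeriv_coeff, smul_eq_mul]

/-- Only the `k = 1` term of `coeff_apply` survives: `d = c ∂ + (higher Hasse derivatives)`. -/
theorem coeff_natDegree_pred [Infinite K] (hd : IsDeltaOperator d) {c : K} (hdX : d X = C c)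
    (f : K[X]) : (d f).coeff (f.natDegree - 1) = c * f.natDegree * f.leadingCoeff := by
  rcases Nat.eq_zero_or_pos f.natDegree with h0 | hpos
  · rw [h0, eq_C_of_natDegree_eq_zero h0, hd.map_C]
    simp
  rw [hd.coeff_apply, Finset.sum_eq_single_of_mem 1 (by simp; omega)]
  · rw [pow_one, hdX, eval_C, Nat.sub_add_cancel hpos, leadingCoeff]
    simp [mul_assoc]
  · intro k _ hk1
    rcases Nat.eq_zero_or_pos k with rfl | hk
    · rw [pow_zero, hd.map_one, eval_zero, zero_mul]
    · rw [coeff_eq_zero_of_natDegree_lt (by omega), mul_zero, mul_zero]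

theorem natDegree_apply_le [Infinite K] (hd : IsDeltaOperator d) (f : K[X]) :
    (d f).natDegree ≤ f.natDegree - 1 := by
  refine natDegree_le_iff_coeff_eq_zero.mpr fun q hq => ?_
  rw [hd.coeff_apply]
  refine Finset.sum_eq_zero fun k _ => ?_
  rcases Nat.eq_zero_or_pos k with rfl | hk
  · rw [pow_zero, hd.map_one, eval_zero, zero_mul]
  · rw [coeff_eq_zero_of_natDegree_lt (by omega), mul_zero, mul_zero]

theorem natDegree_eq_zero_of_apply_eq_zero [CharZero K] (hd : IsDeltaOperator d) {f : K[X]}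
    (hf : d f = 0) : f.natDegree = 0 := by
  obtain ⟨c, hc, hdX⟩ := hd.2
  by_contra hne
  have hf0 : f ≠ 0 := by rintro rfl; simp at hne
  have hcoeff := hd.coeff_natDegree_pred hdX f
  rw [hf, coeff_zero] at hcoeff
  exact mul_ne_zero (mul_ne_zero hc (Nat.cast_ne_zero.mpr hne))
    (leadingCoeff_ne_zero.mpr hf0) hcoeff.symm

theorem eq_zero_of_forall_eval_iterate [CharZero K] (hd : IsDeltaOperator d) {z : ℕ → K}
    {f : K[X]} (h : ∀ i, eval (z i) ((d ^ i) f) = 0) : f = 0 := by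
  induction hn : f.natDegree using Nat.strong_induction_on generalizing z f with
  | _ n ih =>
  have hdf : d f = 0 := by
    rcases Nat.eq_zero_or_pos n with rfl | hpos
    · rw [eq_C_of_natDegree_eq_zero hn, hd.map_C]
    · refine ih _ ?_ (z := fun i => z (i + 1)) (fun i => ?_) rfl
      · have := hd.natDegree_apply_le f
        omega
      · simpa only [pow_succ, Module.End.mul_apply] using h (i + 1)
  have hC := eq_C_of_natDegree_eq_zero (hd.natDegree_eq_zero_of_apply_eq_zero hdf)
  have h0 := h 0
  rw [pow_zero, Module.End.one_apply, hC, eval_C] at h0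
  rw [hC, h0, C_0]

theorem eq_of_forall_eval_iterate_eq [CharZero K] (hd : IsDeltaOperator d) {z : ℕ → K}
    {f g : K[X]} (h : ∀ i, eval (z i) ((d ^ i) f) = eval (z i) ((d ^ i) g)) : f = g :=
  sub_eq_zero.mp <| hd.eq_zero_of_forall_eval_iterate fun i => by
    rw [map_sub, eval_sub, h, sub_self]

end IsDeltaOperator

noncomputable def pincherleDeriv (s : Module.End K K[X]) : Module.End K K[X] :=
  s * LinearMap.mulLeft K X - LinearMap.mulLeft K X * s

theorem pincherleDeriv_apply (s : Module.End K K[X]) (f : K[X]) :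
    pincherleDeriv s f = s (X * f) - X * s f := by
  rw [pincherleDeriv, LinearMap.sub_apply, Module.End.mul_apply, Module.End.mul_apply]
  rfl

theorem isShiftInvariant_pincherleDeriv {s : Module.End K K[X]} (hs : IsShiftInvariant s) :
    IsShiftInvariant (pincherleDeriv s) := by
  intro u
  refine LinearMap.ext fun f => ?_
  simp only [LinearMap.comp_apply, pincherleDeriv_apply, shiftOp_apply, sub_comp, mul_comp,
    X_comp, ← hs.map_comp_X_add_C]
  have hXu : ∀ g : K[X], s ((X + C u) * g) = s (X * g) + C u * s g := fun g => by
    rw [add_mul, map_add, ← smul_eq_C_mul, map_smul, smul_eq_C_mul]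
  rw [hXu]
  ring

namespace IsShiftInvariant

variable {s : Module.End K K[X]}

theorem iterate_succ_X_mul [Infinite K] (hs : IsShiftInvariant s) (j : ℕ) (f : K[X]) :
    (s ^ (j + 1)) (X * f) =
      X * (s ^ (j + 1)) f + ((j + 1 : ℕ) : K) • (s ^ j) (pincherleDeriv s f) := by
  have hcomm : ∀ k g, (s ^ k) (pincherleDeriv s g) = pincherleDeriv s ((s ^ k) g) :=
    fun k => LinearMap.congr_fun ((hs.commute (isShiftInvariant_pincherleDeriv hs)).pow_left k)
  have hmul : ∀ g, s (X * g) = X * s g + pincherleDeriv s g := fun g => by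
    rw [pincherleDeriv_apply]
    ring
  have hpow : ∀ k g, s ((s ^ k) g) = (s ^ (k + 1)) g := fun k g => by
    rw [pow_succ', Module.End.mul_apply]
  induction j with
  | zero => simp [hmul]
  | succ j ih =>
    rw [← hpow, ih, map_add, hmul, map_smul, hpow, hpow, ← hcomm]
    push_cast
    module

end IsShiftInvariant

namespace IsBasicSequence

variable {d : Module.End K K[X]} {p : ℕ → K[X]}

theorem map_succ (hp : IsBasicSequence d p) (n : ℕ) :
    d (p (n + 1)) = ((n + 1 : ℕ) : K) • p n :=
  hp.2.2 (n + 1) n.succ_pos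

theorem X_mul_divX (hp : IsBasicSequence d p) (n : ℕ) : X * divX (p (n + 1)) = p (n + 1) := by
  simpa [coeff_zero_eq_eval_zero, hp.2.1 (n + 1) n.succ_pos] using X_mul_divX_add (p (n + 1))

theorem iterate_apply (hp : IsBasicSequence d p) {j n : ℕ} (h : j ≤ n) :
    (d ^ j) (p n) = (n.descFactorial j : K) • p (n - j) := by
  induction j with
  | zero => simp
  | succ j ih =>
    obtain ⟨m, hm⟩ : ∃ m, n - j = m + 1 := ⟨n - j - 1, by omega⟩
    rw [pow_succ', Module.End.mul_apply, ih (by omega), map_smul, hm, hp.map_succ, smul_smul,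
      Nat.descFactorial_succ, show n - (j + 1) = m by omega, ← hm]
    push_cast [Nat.cast_sub (by omega : j ≤ n)]
    ring_nf

theorem eval_zero_iterate (hd : IsDeltaOperator d) (hp : IsBasicSequence d p) (j n : ℕ) :
    eval 0 ((d ^ j) (p n)) = if j = n then (n.factorial : K) else 0 := by
  rcases lt_trichotomy j n with hlt | rfl | hgt
  · rw [hp.iterate_apply hlt.le, eval_smul, hp.2.1 _ (by omega), smul_zero, if_neg hlt.ne]
  · rw [hp.iterate_apply le_rfl, Nat.sub_self, hp.1, Nat.descFactorial_self]
    simp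
  · obtain ⟨k, rfl⟩ := Nat.exists_eq_add_of_lt hgt
    rw [if_neg (by omega), show n + k + 1 = k + 1 + n by ring, pow_add, Module.End.mul_apply,
      hp.iterate_apply le_rfl, Nat.sub_self, hp.1, pow_succ, Module.End.mul_apply, map_smul,
      hd.map_one]
    simp

/-- The transfer formula. Both sides have the same Gončarov data on the grid `0`, by
`iterate_succ_X_mul` applied to `p (n + 1) = X * divX (p (n + 1))`. -/
theorem pincherleDeriv_divX [CharZero K] (hd : IsDeltaOperator d) (hp : IsBasicSequence d p)
    (n : ℕ) : pincherleDeriv d (divX (p (n + 1))) = p n := by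
  refine hd.eq_of_forall_eval_iterate_eq (z := fun _ => 0) fun k => ?_
  have h := congrArg (eval 0) (hd.1.iterate_succ_X_mul k (divX (p (n + 1))))
  rw [hp.X_mul_divX, hp.eval_zero_iterate hd, eval_add, eval_mul, eval_X, zero_mul, zero_add,
    eval_smul, smul_eq_mul] at h
  rw [hp.eval_zero_iterate hd]
  refine mul_left_cancel₀ (Nat.cast_ne_zero.mpr k.succ_ne_zero : ((k + 1 : ℕ) : K) ≠ 0) ?_
  rw [← h]
  by_cases hkn : k = n
  · simp [hkn, Nat.factorial_succ]
  · simp [hkn]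

theorem map_divX [CharZero K] (hd : IsDeltaOperator d) (hp : IsBasicSequence d p) (n : ℕ) :
    d (divX (p (n + 1))) = (n : K) • divX (p n) := by
  have h := pincherleDeriv_apply d (divX (p (n + 1)))
  rw [hp.pincherleDeriv_divX hd, hp.X_mul_divX, hp.map_succ] at h
  have hX : X * d (divX (p (n + 1))) = (n : K) • p n := by
    push_cast at h
    linear_combination (norm := module) h
  refine mul_left_cancel₀ (X_ne_zero (R := K)) ?_
  rw [hX, mul_smul_comm]
  rcases n with _ | m
  · simp
  · rw [hp.X_mul_divX]

end IsBasicSequence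

/-- For `n ≥ 1`, `abelPoly p a b n = (X - a) p_n(X - a - nb) / (X - a - nb)`, computed as
`((X + nb) p_n / X)(X - a - nb)`. -/
noncomputable def abelPoly (p : ℕ → K[X]) (a b : K) (n : ℕ) : K[X] :=
  (p n + ((n : K) * b) • divX (p n)).comp (X - C (a + n * b))

namespace IsBasicSequence

variable {d : Module.End K K[X]} {p : ℕ → K[X]} {a b : K}

theorem comp_eq_mul_divX_comp (hp : IsBasicSequence d p) (n : ℕ) (q : K[X]) :
    (p (n + 1)).comp q = q * (divX (p (n + 1))).comp q := by
  conv_lhs => rw [← hp.X_mul_divX n]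
  rw [mul_comp, X_comp]

theorem eval_abelPoly_succ (hp : IsBasicSequence d p) (n : ℕ) :
    eval a (abelPoly p a b (n + 1)) = 0 := by
  rw [abelPoly, add_comp, hp.comp_eq_mul_divX_comp, smul_comp]
  simp only [eval_add, eval_mul, eval_smul, eval_sub, eval_X, eval_C, smul_eq_mul]
  ring

theorem map_abelPoly_succ [CharZero K] (hd : IsDeltaOperator d) (hp : IsBasicSequence d p)
    (n : ℕ) : d (abelPoly p a b (n + 1)) = ((n + 1 : ℕ) : K) • abelPoly p (a + b) b n := by
  have hshift : ∀ (v : K) (g : K[X]), d (g.comp (X - C v)) = (d g).comp (X - C v) :=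
    fun v g => by simpa [sub_eq_add_neg] using hd.1.map_comp_X_add_C (-v) g
  rw [abelPoly, abelPoly, hshift, map_add, map_smul, hp.map_succ, hp.map_divX hd, ← smul_comp]
  congr 1
  · module
  · push_cast
    ring_nf

theorem eval_iterate_abelPoly [CharZero K] (hd : IsDeltaOperator d) (hp : IsBasicSequence d p)
    (n i : ℕ) :
    eval (a + i * b) ((d ^ i) (abelPoly p a b n)) = if i = n then (n.factorial : K) else 0 := by
  induction n generalizing a i with
  | zero =>
    rw [abelPoly, Nat.cast_zero, zero_mul, zero_smul, add_zero, hp.1, one_comp]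
    rcases i with _ | i
    · simp
    · rw [pow_succ, Module.End.mul_apply, hd.map_one]
      simp
  | succ n ih =>
    rcases i with _ | i
    · simp [hp.eval_abelPoly_succ]
    · rw [pow_succ, Module.End.mul_apply, hp.map_abelPoly_succ hd, map_smul, eval_smul,
        show a + ((i + 1 : ℕ) : K) * b = a + b + i * b by push_cast; ring, ih]
      by_cases hin : i = n
      · simp [hin, Nat.factorial_succ]
      · simp [hin]

theorem X_sub_C_mul_abelPoly_succ (hp : IsBasicSequence d p) (n : ℕ) :
    (X - C (a + ((n + 1 : ℕ) : K) * b)) * abelPoly p a b (n + 1) =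
      (X - C a) * (p (n + 1)).comp (X - C (a + ((n + 1 : ℕ) : K) * b)) := by
  rw [abelPoly, add_comp, smul_comp, hp.comp_eq_mul_divX_comp, smul_eq_C_mul, C_add]
  ring

end IsBasicSequence

end

theorem stmt18 {K : Type*} [Field K] [CharZero K] (d : Module.End K (Polynomial K))
    (hd : IsDeltaOperator d) (p : ℕ → Polynomial K) (hp : IsBasicSequence d p)
    (a b : K) (t : ℕ → Polynomial K)
    (ht : IsGoncarovBasis d (fun i => a + (i : K) * b) t) :
    ∀ n : ℕ, 1 ≤ n →
      (X - C (a + (n : K) * b)) * t n =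
        (X - C a) * (p n).comp (X - C (a + (n : K) * b)) := by
  intro n hn
  obtain ⟨n, rfl⟩ := Nat.exists_eq_add_of_le' hn
  have ht_abel : t (n + 1) = abelPoly p a b (n + 1) :=
    hd.eq_of_forall_eval_iterate_eq fun i => by
      rw [(ht (n + 1)).2 i, hp.eval_iterate_abelPoly hd]
  rw [ht_abel, hp.X_sub_C_mul_abelPoly_succ]
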